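/- Suppose L₀ is a sequential contraction of L. Then the dimensions of the terms of the lower central series do not increase: for every l : ℕ, finrank ℝ (lowerCentralSeries ℝ L₀ L₀ l : Submodule ℝ L₀) ≤ finrank ℝ (lowerCentralSeries ℝ L L l : Submodule ℝ L). -/

import Mathlib

/-!
By induction on `k`, every element of the `k`-th term of the lower central series of `L₀` is a
limit of `T p (u p)` with `u p` in the `k`-th term for `L`. If `T p (u p) → n`, then
`T p ⁅(T p).symm x, u p⁆ → ⁅x, n⁆`, because on a finite-dimensional space pointwise convergence of the linear
maps `T p ∘ ad ((T p).symm x) ∘ (T p).symm` to `ad x` survives a convergent argument. Linear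
independence is an open condition, so a basis of the term of `L₀` is approximated by images of
independent families in the term of `L`.
-/

open Filter Module

/-- `L₀` is a sequential contraction of the real Lie algebra `L`: there is a sequence of
real-linear equivalences `T p : L ≃ₗ[ℝ] L₀` such that the transported brackets converge to the
bracket of `L₀`. -/
def IsSequentialContraction (L L₀ : Type*) [LieRing L] [LieAlgebra ℝ L]
    [LieRing L₀] [LieAlgebra ℝ L₀] [TopologicalSpace L₀] : Prop :=
  ∃ T : ℕ → (L ≃ₗ[ℝ] L₀), ∀ x y : L₀,
    Tendsto (fun p => T p ⁅(T p).symm x, (T p).symm y⁆) atTop (nhds ⁅x, y⁆)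

open Topology

section FiniteDimensional

variable {𝕜 : Type*} [NontriviallyNormedField 𝕜] [CompleteSpace 𝕜]
  {E : Type*} [AddCommGroup E] [Module 𝕜 E] [TopologicalSpace E] [IsTopologicalAddGroup E]
  [ContinuousSMul 𝕜 E] [T2Space E] [FiniteDimensional 𝕜 E]
  {ι : Type*} {l : Filter ι}

theorem LinearMap.tendsto_apply_of_tendsto_pointwise
    {F : Type*} [AddCommGroup F] [Module 𝕜 F] [TopologicalSpace F] [ContinuousAdd F]
    [ContinuousSMul 𝕜 F] {f : ι → E →ₗ[𝕜] F} {g : E →ₗ[𝕜] F}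
    (hf : ∀ y, Tendsto (fun p => f p y) l (𝓝 (g y))) {y : ι → E} {y₀ : E}
    (hy : Tendsto y l (𝓝 y₀)) :
    Tendsto (fun p => f p (y p)) l (𝓝 (g y₀)) := by
  classical
  let b := Module.finBasis 𝕜 E
  have expand (h : E →ₗ[𝕜] F) (v : E) : h v = ∑ i, b.repr v i • h (b i) := by
    conv_lhs => rw [← b.sum_repr v]
    simp only [map_sum, map_smul]
  rw [show (fun p => f p (y p)) = fun p => ∑ i, b.repr (y p) i • f p (b i) from
    funext fun p => expand _ _, expand g]
  exact tendsto_finsetSum _ fun i _ =>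
    (((b.coord i).continuous_of_finiteDimensional.tendsto y₀).comp hy).smul (hf (b i))

theorem LinearIndependent.eventually_nhds {κ : Type*} [Finite κ] {v : κ → E}
    (hv : LinearIndependent 𝕜 v) : ∀ᶠ w in 𝓝 v, LinearIndependent 𝕜 w := by
  let e : E ≃L[𝕜] (Fin (finrank 𝕜 E) → 𝕜) :=
    (Module.finBasis 𝕜 E).equivFun.toContinuousLinearEquiv
  have he : Continuous fun w : κ → E => e ∘ w := by fun_prop
  exact (he.tendsto v).eventually (hv.map' e.toLinearMap e.ker).eventually
    |>.mono fun w hw => hw.of_comp e.toLinearMap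

end FiniteDimensional

namespace Submodule

variable {𝕜 : Type*} [NontriviallyNormedField 𝕜]
  {M : Type*} [AddCommGroup M] [Module 𝕜 M]
  {E : Type*} [AddCommGroup E] [Module 𝕜 E] [TopologicalSpace E]
  {ι : Type*}

def limitsAlong [ContinuousAdd E] [ContinuousConstSMul 𝕜 E]
    (T : ι → M →ₗ[𝕜] E) (l : Filter ι) (V : Submodule 𝕜 M) : Submodule 𝕜 E where
  carrier := {z | ∃ u : ι → M, (∀ p, u p ∈ V) ∧ Tendsto (fun p => T p (u p)) l (𝓝 z)}
  zero_mem' := ⟨0, fun _ => V.zero_mem, by simpa using tendsto_const_nhds⟩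
  add_mem' := by
    rintro _ _ ⟨u, hu, hlim⟩ ⟨v, hv, hlim'⟩
    exact ⟨u + v, fun p => V.add_mem (hu p) (hv p), by simpa using hlim.add hlim'⟩
  smul_mem' := by
    rintro c _ ⟨u, hu, hlim⟩
    exact ⟨c • u, fun p => V.smul_mem c (hu p), by simpa using hlim.const_smul c⟩

theorem finrank_le_of_le_limitsAlong [CompleteSpace 𝕜] [Module.Finite 𝕜 M]
    [IsTopologicalAddGroup E] [ContinuousSMul 𝕜 E] [T2Space E] [FiniteDimensional 𝕜 E]
    {T : ι → M →ₗ[𝕜] E} {l : Filter ι} [l.NeBot] {V : Submodule 𝕜 M} {W : Submodule 𝕜 E}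
    (hW : W ≤ V.limitsAlong T l) :
    finrank 𝕜 W ≤ finrank 𝕜 V := by
  let b := Module.finBasis 𝕜 W
  choose u hu hlim using fun i => hW (b i).2
  have hb : LinearIndependent 𝕜 fun i => (b i : E) :=
    b.linearIndependent.map' W.subtype W.ker_subtype
  obtain ⟨p, hp⟩ := (tendsto_pi_nhds.2 hlim |>.eventually hb.eventually_nhds).exists
  let w : Fin (finrank 𝕜 W) → V := fun i => ⟨u i p, hu i p⟩
  have hw : LinearIndependent 𝕜 w := hp.of_comp ((T p).comp V.subtype)
  simpa using hw.fintype_card_le_finrank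

end Submodule

section LieAlgebra

open LieModule

variable {𝕜 : Type*} [NontriviallyNormedField 𝕜] [CompleteSpace 𝕜]
  {L L₀ : Type*} [LieRing L] [LieAlgebra 𝕜 L] [LieRing L₀] [LieAlgebra 𝕜 L₀]
  [TopologicalSpace L₀] [IsTopologicalAddGroup L₀] [ContinuousSMul 𝕜 L₀] [T2Space L₀]
  [FiniteDimensional 𝕜 L₀] {ι : Type*} {l : Filter ι}

theorem lowerCentralSeries_le_limitsAlong {T : ι → L ≃ₗ[𝕜] L₀}
    (hT : ∀ x y : L₀, Tendsto (fun p => T p ⁅(T p).symm x, (T p).symm y⁆) l (𝓝 ⁅x, y⁆))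
    (k : ℕ) : (lowerCentralSeries 𝕜 L₀ L₀ k : Submodule 𝕜 L₀) ≤
      (lowerCentralSeries 𝕜 L L k : Submodule 𝕜 L).limitsAlong (fun p => T p) l := by
  simp only [LieIdeal.toLieSubalgebra_toSubmodule]
  induction k with
  | zero =>
    intro z _
    exact ⟨fun p => (T p).symm z, fun _ => LieSubmodule.mem_top _,
      by simpa using tendsto_const_nhds⟩
  | succ k ih =>
    rw [LieModule.lowerCentralSeries_succ, LieSubmodule.lieIdeal_oper_eq_linear_span',
      Submodule.span_le]
    rintro _ ⟨x, -, m, hm, rfl⟩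
    obtain ⟨u, hu, hlim⟩ := ih hm
    refine ⟨fun p => ⁅(T p).symm x, u p⁆, fun p => ?_, ?_⟩
    · rw [LieModule.lowerCentralSeries_succ]
      exact LieSubmodule.lie_mem_lie (LieSubmodule.mem_top _) (hu p)
    · simpa using LinearMap.tendsto_apply_of_tendsto_pointwise
        (f := fun p => (T p : L →ₗ[𝕜] L₀) ∘ₗ LieAlgebra.ad 𝕜 L ((T p).symm x) ∘ₗ (T p).symm)
        (g := LieAlgebra.ad 𝕜 L₀ x) (hT x) hlim

end LieAlgebra

open LieModule in
/-- Under a sequential contraction, the dimensions of the terms of the lower central series do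
not increase. -/
theorem lowerCentralSeries_finrank_le_of_contraction {L L₀ : Type*} [LieRing L] [LieAlgebra ℝ L] [LieRing L₀] [LieAlgebra ℝ L₀]
    [Module.Finite ℝ L] [Module.Finite ℝ L₀]
    [TopologicalSpace L₀] [IsTopologicalAddGroup L₀] [ContinuousSMul ℝ L₀] [T2Space L₀]
    (h : IsSequentialContraction L L₀) :
    ∀ l : ℕ,
      finrank ℝ (lowerCentralSeries ℝ L₀ L₀ l : Submodule ℝ L₀) ≤
        finrank ℝ (lowerCentralSeries ℝ L L l : Submodule ℝ L) := by
  obtain ⟨T, hT⟩ := h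
  exact fun k => Submodule.finrank_le_of_le_limitsAlong (lowerCentralSeries_le_limitsAlong hT k)
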